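/- arXiv:2504.19481 — 2 statements merged into one kernel-verified Lean document; each statement's English description precedes it below -/
import Mathlib

section
/- Under the hypotheses of the previous item, together with: (i) the trace bound ‖(u₂)_T‖²_Γ ≤ C_tr² ‖u₂‖ ‖curl u₂‖ for u₂ ∈ X, (ii) the spectral lower bound ‖curl u₂‖² = Σ_j λ_j|μ_j|², ‖u₂‖² = Σ_j|μ_j|², C_T κ²(T u₂,u₂) = C_T κ² Σ_{j≤N}|μ_j|² with 0 < λ_1 ≤ ... ≤ λ_N ≤ C_T κ² < λ_{N+1} and C_T = 6 + 49 C_tr⁴ λ², one has (Re+Im) b(u₁+u₂, u₂−u₁) ≥ (1/2)(|||u₁|||² + |||u₂|||²) where |||w|||² = ‖curl w‖² + κ²‖w‖² + κλ‖w_T‖²_Γ. -/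
open scoped ComplexConjugate

/-!
Expanding `b(u₁ + u₂, u₂ − u₁)`, the curl and smoothing terms only see `u₂`, the `L²` term
becomes `κ²(‖u₁‖² − ‖u₂‖²)` by orthogonality, and the boundary term contributes
`κλ(‖u₁‖²_Γ − ‖u₂‖²_Γ)` to the imaginary part and `2κλ Im tF(u₁, u₂)` to the real part.
The mixed boundary term is absorbed by Cauchy–Schwarz and Young's inequality, the boundary norm of
`u₂` by the trace bound and Young's inequality, at the price of `(49/4) C_tr⁴ κ²λ² ‖u₂‖²`.
The negative `L²` contribution of `u₂` is then paid by the spectral bound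
`C_T κ² ‖u₂‖² ≤ ‖curl u₂‖² + C_T κ² (T u₂, u₂)`: modes below the truncation are controlled by the
smoothing term, those above it by `λ_j > C_T κ²`. The choice `C_T = 6 + 49 C_tr⁴ λ²` is exactly
what makes the bookkeeping close.
-/

lemma mul_tsum_le_tsum_mul_add_mul_sum_range {a w : ℕ → ℝ} {c : ℝ} {n : ℕ}
    (ha : ∀ j, 0 ≤ a j) (hw : ∀ j, 0 ≤ w j) (hc : ∀ j, n ≤ j → c ≤ w j)
    (hsa : Summable a) (hswa : Summable fun j => w j * a j) :
    c * ∑' j, a j ≤ ∑' j, w j * a j + c * ∑ j ∈ Finset.range n, a j := by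
  rw [← hsa.sum_add_tsum_nat_add n, ← hswa.sum_add_tsum_nat_add n, mul_add, ← tsum_mul_left]
  have head : 0 ≤ ∑ j ∈ Finset.range n, w j * a j :=
    Finset.sum_nonneg fun j _ => mul_nonneg (hw j) (ha j)
  have tail : ∑' j, c * a (j + n) ≤ ∑' j, w (j + n) * a (j + n) :=
    Summable.tsum_le_tsum (fun j => mul_le_mul_of_nonneg_right (hc _ (Nat.le_add_left n j)) (ha _))
      (((summable_nat_add_iff n).2 hsa).mul_left c) ((summable_nat_add_iff n).2 hswa)
  linarith

lemma abs_im_le_of_norm_le_sqrt_mul_sqrt {z : ℂ} {a b : ℝ} (ha : 0 ≤ a) (hb : 0 ≤ b)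
    (h : ‖z‖ ≤ √a * √b) : |z.im| ≤ a / 4 + b := by
  have young : √a * √b ≤ a / 4 + b := by
    nlinarith [sq_nonneg (√a - 2 * √b), Real.sq_sqrt ha, Real.sq_sqrt hb]
  exact (Complex.abs_im_le_norm z).trans (h.trans young)

lemma mul_le_quarter_add_sq_of_le_mul_sqrt {a s t c : ℝ} (ha : 0 ≤ a) (hs : 0 ≤ s)
    (h : t ≤ c * √a) : s * t ≤ a / 4 + (s * c) ^ 2 := by
  nlinarith [sq_nonneg (√a / 2 - s * c), Real.sq_sqrt ha, mul_le_mul_of_nonneg_left h hs]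

lemma LinearMap.apply_add_sub_of_apply_swap_eq_conj {V : Type*} [AddCommGroup V] [Module ℂ V]
    (f : V →ₛₗ[starRingEnd ℂ] V →ₗ[ℂ] ℂ) {x y : V} (h : f y x = conj (f x y)) :
    f (x + y) (y - x) = f y y - f x x + ((2 * (f x y).im : ℝ) : ℂ) * Complex.I := by
  simp only [map_add, map_sub, LinearMap.add_apply, h]
  rw [← Complex.sub_conj]
  ring

lemma re_add_im_apply_add_sub_eq {V : Type*} [NormedAddCommGroup V] [InnerProductSpace ℂ V]
    {cF TF tF : V →ₛₗ[starRingEnd ℂ] V →ₗ[ℂ] ℂ} {P : V →ₗ[ℂ] V} {κ lam CT : ℝ} {u₁ u₂ : V}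
    (hc1 : ∀ w, cF u₁ w = 0) (hc1' : ∀ w, cF w u₁ = 0)
    (horth : inner ℂ u₁ u₂ = 0) (horth' : inner ℂ u₂ u₁ = 0) (hP1 : P u₁ = 0) (hP2 : P u₂ = u₂)
    (hcF2 : (cF u₂ u₂).im = 0) (hTF2 : (TF u₂ u₂).im = 0)
    (htd1 : (tF u₁ u₁).im = 0) (htd2 : (tF u₂ u₂).im = 0)
    (therm : tF u₂ u₁ = conj (tF u₁ u₂)) {b : V → V → ℂ}
    (hb : ∀ x y, b x y = cF x y - (κ : ℂ) ^ 2 * inner ℂ x y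
        + (CT : ℂ) * (κ : ℂ) ^ 2 * TF (P x) (P y) - Complex.I * (κ : ℂ) * (lam : ℂ) * tF x y) :
    (b (u₁ + u₂) (u₂ - u₁)).re + (b (u₁ + u₂) (u₂ - u₁)).im
      = (cF u₂ u₂).re - κ ^ 2 * (‖u₂‖ ^ 2 - ‖u₁‖ ^ 2) + CT * κ ^ 2 * (TF u₂ u₂).re
        + κ * lam * (2 * (tF u₁ u₂).im + (tF u₁ u₁).re - (tF u₂ u₂).re) := by
  have hinner (v : V) : inner ℂ v v = (‖v‖ : ℂ) ^ 2 := inner_self_eq_norm_sq_to_K v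
  have hb_eq : b (u₁ + u₂) (u₂ - u₁) = cF u₂ u₂ - (κ : ℂ) ^ 2 * ((‖u₂‖ : ℂ) ^ 2 - (‖u₁‖ : ℂ) ^ 2)
      + (CT : ℂ) * (κ : ℂ) ^ 2 * TF u₂ u₂ - Complex.I * (κ : ℂ) * (lam : ℂ) *
        (tF u₂ u₂ - tF u₁ u₁ + ((2 * (tF u₁ u₂).im : ℝ) : ℂ) * Complex.I) := by
    rw [hb, LinearMap.apply_add_sub_of_apply_swap_eq_conj tF therm]
    simp only [map_add, map_sub, LinearMap.add_apply, hc1, hc1', hP1, hP2, map_zero,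
      LinearMap.zero_apply, inner_add_left, inner_sub_right, horth, horth', hinner]
    ring
  rw [hb_eq]
  simp only [← Complex.ofReal_pow, Complex.add_re, Complex.sub_re, Complex.mul_re,
    Complex.mul_im, Complex.add_im, Complex.sub_im, Complex.I_re, Complex.I_im,
    Complex.ofReal_re, Complex.ofReal_im, hcF2, hTF2, htd1, htd2]
  ring

theorem stmt6_general {V : Type*} [NormedAddCommGroup V] [InnerProductSpace ℂ V]
    (cF TF tF : V →ₛₗ[starRingEnd ℂ] V →ₗ[ℂ] ℂ)
    (P : V →ₗ[ℂ] V) (κ lam CT Ctr : ℝ) (hκ : 0 < κ) (hlam : 0 < lam)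
    (hCTdef : CT = 6 + 49 * Ctr ^ 4 * lam ^ 2)
    (u₁ u₂ : V)
    (hc1 : ∀ w, cF u₁ w = 0) (hc1' : ∀ w, cF w u₁ = 0)
    (horth : (inner ℂ u₁ u₂ : ℂ) = 0) (horth' : (inner ℂ u₂ u₁ : ℂ) = 0)
    (hP1 : P u₁ = 0) (hP2 : P u₂ = u₂)
    (hcF2 : (cF u₂ u₂).im = 0) (hTF2 : (TF u₂ u₂).im = 0)
    (htd1 : (tF u₁ u₁).im = 0) (htd2 : (tF u₂ u₂).im = 0)
    (htd1' : 0 ≤ (tF u₁ u₁).re) (htd2' : 0 ≤ (tF u₂ u₂).re)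
    (therm : tF u₂ u₁ = starRingEnd ℂ (tF u₁ u₂))
    (μ : ℕ → ℂ) (lamj : ℕ → ℝ)
    (hlpos : ∀ j, 0 < lamj j) (hlmono : Monotone lamj) (N : ℕ)
    (hN' : CT * κ ^ 2 < lamj (N + 1))
    (hsum1 : Summable fun j => ‖μ j‖ ^ 2)
    (hsum2 : Summable fun j => lamj j * ‖μ j‖ ^ 2)
    (hArep : (cF u₂ u₂).re = ∑' j, lamj j * ‖μ j‖ ^ 2)
    (hBrep : ‖u₂‖ ^ 2 = ∑' j, ‖μ j‖ ^ 2)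
    (hSrep : (TF u₂ u₂).re = ∑ j ∈ Finset.range (N + 1), ‖μ j‖ ^ 2)
    (htr : (tF u₂ u₂).re ≤ Ctr ^ 2 * ‖u₂‖ * Real.sqrt ((cF u₂ u₂).re))
    (hCS : ‖tF u₁ u₂‖ ≤ Real.sqrt ((tF u₁ u₁).re) * Real.sqrt ((tF u₂ u₂).re))
    (b : V → V → ℂ)
    (hb : ∀ x y, b x y = cF x y - (κ : ℂ) ^ 2 * (inner ℂ x y : ℂ)
        + (CT : ℂ) * (κ : ℂ) ^ 2 * TF (P x) (P y)
        - Complex.I * (κ : ℂ) * (lam : ℂ) * tF x y) :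
    (b (u₁ + u₂) (u₂ - u₁)).re + (b (u₁ + u₂) (u₂ - u₁)).im ≥
      (1 / 2) * ((κ ^ 2 * ‖u₁‖ ^ 2 + κ * lam * (tF u₁ u₁).re)
        + ((cF u₂ u₂).re + κ ^ 2 * ‖u₂‖ ^ 2 + κ * lam * (tF u₂ u₂).re)) := by
  rw [re_add_im_apply_add_sub_eq hc1 hc1' horth horth' hP1 hP2 hcF2 hTF2 htd1 htd2 therm hb,
    ge_iff_le]
  have hcurl : 0 ≤ (cF u₂ u₂).re :=
    hArep ▸ tsum_nonneg fun j => mul_nonneg (hlpos j).le (sq_nonneg _)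
  have hsmooth : 0 ≤ CT * κ ^ 2 * (TF u₂ u₂).re := by
    have : 0 ≤ (TF u₂ u₂).re := hSrep ▸ Finset.sum_nonneg fun j _ => sq_nonneg _
    rw [hCTdef]
    positivity
  have hspectral : CT * κ ^ 2 * ‖u₂‖ ^ 2 ≤ (cF u₂ u₂).re + CT * κ ^ 2 * (TF u₂ u₂).re := by
    rw [hArep, hBrep, hSrep]
    exact mul_tsum_le_tsum_mul_add_mul_sum_range (fun j => sq_nonneg _) (fun j => (hlpos j).le)
      (fun j hj => hN'.le.trans (hlmono hj)) hsum1 hsum2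
  have hκlam : 0 ≤ κ * lam := by positivity
  have hmixed := mul_le_mul_of_nonneg_left
    (neg_le_of_abs_le (abs_im_le_of_norm_le_sqrt_mul_sqrt htd1' htd2' hCS)) hκlam
  have htrace := mul_le_quarter_add_sq_of_le_mul_sqrt hcurl
    (by positivity : 0 ≤ 7 / 2 * (κ * lam)) htr
  rw [hCTdef] at hspectral hsmooth ⊢
  linarith [sq_nonneg (κ * ‖u₁‖)]

/-- Coercivity lower bound in the inf-sup proof (Lemma 3.2):
under the trace bound and the spectral representation of `u₂`,
`(Re+Im) b(u₁+u₂, u₂−u₁) ≥ (1/2)(|||u₁|||² + |||u₂|||²)`. -/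
theorem stmt6 {V : Type*} [NormedAddCommGroup V] [InnerProductSpace ℂ V]
    (cF TF tF : V →ₛₗ[starRingEnd ℂ] V →ₗ[ℂ] ℂ)
    (P : V →ₗ[ℂ] V) (κ lam CT Ctr : ℝ) (hκ : 0 < κ) (hlam : 0 < lam)
    (hCtr : 0 ≤ Ctr) (hCTdef : CT = 6 + 49 * Ctr ^ 4 * lam ^ 2)
    (u₁ u₂ : V)
    (hc1 : ∀ w, cF u₁ w = 0) (hc1' : ∀ w, cF w u₁ = 0)
    (horth : (inner ℂ u₁ u₂ : ℂ) = 0) (horth' : (inner ℂ u₂ u₁ : ℂ) = 0)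
    (hP1 : P u₁ = 0) (hP2 : P u₂ = u₂)
    (hcF2 : (cF u₂ u₂).im = 0) (hTF2 : (TF u₂ u₂).im = 0)
    (htd1 : (tF u₁ u₁).im = 0) (htd2 : (tF u₂ u₂).im = 0)
    (htd1' : 0 ≤ (tF u₁ u₁).re) (htd2' : 0 ≤ (tF u₂ u₂).re)
    (therm : tF u₂ u₁ = starRingEnd ℂ (tF u₁ u₂))
    (μ : ℕ → ℂ) (lamj : ℕ → ℝ)
    (hlpos : ∀ j, 0 < lamj j) (hlmono : Monotone lamj) (N : ℕ)
    (hN : lamj N ≤ CT * κ ^ 2) (hN' : CT * κ ^ 2 < lamj (N + 1))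
    (hsum1 : Summable fun j => ‖μ j‖ ^ 2)
    (hsum2 : Summable fun j => lamj j * ‖μ j‖ ^ 2)
    (hArep : (cF u₂ u₂).re = ∑' j, lamj j * ‖μ j‖ ^ 2)
    (hBrep : ‖u₂‖ ^ 2 = ∑' j, ‖μ j‖ ^ 2)
    (hSrep : (TF u₂ u₂).re = ∑ j ∈ Finset.range (N + 1), ‖μ j‖ ^ 2)
    (htr : (tF u₂ u₂).re ≤ Ctr ^ 2 * ‖u₂‖ * Real.sqrt ((cF u₂ u₂).re))
    (hCS : ‖tF u₁ u₂‖ ≤ Real.sqrt ((tF u₁ u₁).re) * Real.sqrt ((tF u₂ u₂).re))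
    (b : V → V → ℂ)
    (hb : ∀ x y, b x y = cF x y - (κ : ℂ) ^ 2 * (inner ℂ x y : ℂ)
        + (CT : ℂ) * (κ : ℂ) ^ 2 * TF (P x) (P y)
        - Complex.I * (κ : ℂ) * (lam : ℂ) * tF x y) :
    (b (u₁ + u₂) (u₂ - u₁)).re + (b (u₁ + u₂) (u₂ - u₁)).im ≥
      (1 / 2) * ((κ ^ 2 * ‖u₁‖ ^ 2 + κ * lam * (tF u₁ u₁).re)
        + ((cF u₂ u₂).re + κ ^ 2 * ‖u₂‖ ^ 2 + κ * lam * (tF u₂ u₂).re)) :=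
  stmt6_general cF TF tF P κ lam CT Ctr hκ hlam hCTdef u₁ u₂ hc1 hc1' horth horth' hP1 hP2 hcF2 hTF2
    htd1 htd2 htd1' htd2' therm μ lamj hlpos hlmono N hN' hsum1 hsum2 hArep hBrep hSrep htr hCS b hb
end

section
/- Let b be a sesquilinear form on V, V_h ⊆ V a subspace, and P_h⁻ : V → V_h the adjoint elliptic projection defined by b(v_h, u − P_h⁻u) = 0 for all v_h ∈ V_h. Suppose for each v in a dual-data space there is w(v) ∈ V with b(w(v), φ) = (P⊥v, φ) for all φ ∈ V, satisfying the regularity bound ‖w(v)‖_{p+1} ≤ C‖v‖_{p-1,κ}. Suppose further the approximation property inf_{χ_h∈V_h} |||w(v) − χ_h||| ≤ C h^p ‖w(v)‖_{p+1}, continuity |b(x,y)| ≤ C|||x||| |||y|||, and the quasi-optimality |||u − P_h⁻u||| ≤ C inf_{v_h} |||u − v_h|||. Then the negative-norm estimate holds: sup_{v≠0} |(P⊥(u − P_h⁻u), v)| / ‖v‖_{p-1,κ} ≤ C h^p inf_{v_h∈V_h} |||u − v_h|||. -/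
/-! Aubin–Nitsche duality: by the adjoint Galerkin orthogonality the dual solution `w v` may be
replaced by `w v - χ` for any `χ ∈ V_h`, so `(P⊥(u - P_h⁻u), v) = b(w v - χ, u - P_h⁻u)`;
continuity then splits this into the approximation error of `w v`, of order `h^p ‖v‖_{p-1,κ}`
by approximation and regularity, times the energy error, bounded by quasi-optimality. -/

theorem norm_apply_le_of_orthogonal {V : Type*} [AddGroup V] (b : V → V → ℂ) (E : V → ℝ)
    (hE : ∀ x, 0 ≤ E x) (hbsub : ∀ x y z, b (x - y) z = b x z - b y z) {C : ℝ} (hC : 0 ≤ C)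
    (hcont : ∀ x y, ‖b x y‖ ≤ C * E x * E y) {w χ e : V} (horth : b χ e = 0) {δ ε : ℝ}
    (hδ : E (w - χ) ≤ δ) (hε : E e ≤ ε) :
    ‖b w e‖ ≤ C * δ * ε := by
  have hwe : b w e = b (w - χ) e := by rw [hbsub, horth, sub_zero]
  calc ‖b w e‖ = ‖b (w - χ) e‖ := by rw [hwe]
    _ ≤ C * E (w - χ) * E e := hcont _ _
    _ ≤ C * δ * ε := by
        gcongr
        · exact hE _
        · exact mul_nonneg hC ((hE _).trans hδ)

theorem stmt15_general {V D : Type*} [AddCommGroup V] [Module ℂ V]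
    (Vh : Submodule ℂ V) (Enorm nreg : V → ℝ) (nd : D → ℝ)
    (hE : ∀ x, 0 ≤ Enorm x)
    (b : V → V → ℂ) (pair : D → V → ℂ)
    (hbsub : ∀ x y z, b (x - y) z = b x z - b y z)
    (Cc Ca Creg Cq hstep : ℝ) (p : ℕ)
    (hCc : 0 ≤ Cc) (hCa : 0 ≤ Ca)
    (hh : 0 < hstep)
    (hcont : ∀ x y, ‖b x y‖ ≤ Cc * Enorm x * Enorm y)
    (w : D → V)
    (hw : ∀ v φ, b (w v) φ = pair v φ)
    (hreg : ∀ v, nreg (w v) ≤ Creg * nd v)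
    (happrox : ∀ v, ∃ χ ∈ Vh, Enorm (w v - χ) ≤ Ca * hstep ^ p * nreg (w v))
    (u uP : V) (Ebest : ℝ)
    (hGal : ∀ vh ∈ Vh, b vh (u - uP) = 0)
    (hquasi : Enorm (u - uP) ≤ Cq * Ebest) :
    ∀ v : D, ‖pair v (u - uP)‖ ≤
      (Cc * Ca * Creg * Cq) * hstep ^ p * nd v * Ebest := by
  intro v
  obtain ⟨χ, hχ, happroxχ⟩ := happrox v
  have hinterp : Enorm (w v - χ) ≤ Ca * hstep ^ p * (Creg * nd v) :=
    happroxχ.trans (by gcongr; exact hreg v)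
  calc ‖pair v (u - uP)‖ = ‖b (w v) (u - uP)‖ := by rw [hw]
    _ ≤ Cc * (Ca * hstep ^ p * (Creg * nd v)) * (Cq * Ebest) :=
        norm_apply_le_of_orthogonal b Enorm hE hbsub hCc hcont (hGal χ hχ) hinterp hquasi
    _ = (Cc * Ca * Creg * Cq) * hstep ^ p * nd v * Ebest := by ring

/-- Abstract negative-norm error estimate for the adjoint elliptic projection
(Lemma 3.5): duality + adjoint Galerkin orthogonality + continuity +
approximation + regularity give `|(P⊥(u − P_h⁻u), v)| ≤ C h^p (inf-error) ‖v‖_{p-1,κ}`. -/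
theorem stmt15 {V D : Type*} [AddCommGroup V] [Module ℂ V]
    (Vh : Submodule ℂ V) (Enorm nreg : V → ℝ) (nd : D → ℝ)
    (hE : ∀ x, 0 ≤ Enorm x) (hnd : ∀ v, 0 ≤ nd v) (hnreg : ∀ x, 0 ≤ nreg x)
    (b : V → V → ℂ) (pair : D → V → ℂ)
    (hbsub : ∀ x y z, b (x - y) z = b x z - b y z)
    (Cc Ca Creg Cq hstep : ℝ) (p : ℕ)
    (hCc : 0 ≤ Cc) (hCa : 0 ≤ Ca) (hCreg : 0 ≤ Creg) (hCq : 0 ≤ Cq)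
    (hh : 0 < hstep)
    (hcont : ∀ x y, ‖b x y‖ ≤ Cc * Enorm x * Enorm y)
    (w : D → V)
    (hw : ∀ v φ, b (w v) φ = pair v φ)
    (hreg : ∀ v, nreg (w v) ≤ Creg * nd v)
    (happrox : ∀ v, ∃ χ ∈ Vh, Enorm (w v - χ) ≤ Ca * hstep ^ p * nreg (w v))
    (u uP : V) (Ebest : ℝ) (hEbest : 0 ≤ Ebest)
    (hGal : ∀ vh ∈ Vh, b vh (u - uP) = 0)
    (hquasi : Enorm (u - uP) ≤ Cq * Ebest) :
    ∀ v : D, ‖pair v (u - uP)‖ ≤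
      (Cc * Ca * Creg * Cq) * hstep ^ p * nd v * Ebest :=
  stmt15_general Vh Enorm nreg nd hE b pair hbsub Cc Ca Creg Cq hstep p hCc hCa hh hcont w hw hreg
    happrox u uP Ebest hGal hquasi
end
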